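/- Let t0 < t1, A ∈ ℝ^{n×n}, B ∈ ℝ^{n×p}, let 𝔾 = ∫_{t0}^{t1} e^{(t1−s)A} B Bᵀ e^{(t1−s)Aᵀ} ds, and set 𝒞 = range 𝔾 and 𝒰 = 𝒞^⊥ (orthogonal complement in ℝ^n). Then: (i) ℝ^n = 𝒞 ⊕ 𝒰; (ii) every element of 𝒞 is reachable at time t1 from the initial state 0 at time t0 by some control u ∈ L²((t0,t1); ℝ^p); (iii) no element of 𝒰 ∖ {0} is reachable at time t1 from the initial state 0 at time t0; moreover (iv) 𝒰 = ker Mᵀ, where M = [B, AB, …, A^{n−1}B] is the Kalman matrix. -/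

import Mathlib

open MeasureTheory Matrix NormedSpace

/-- The Kalman matrix `M = [B, AB, …, A^{n−1}B]`. -/
noncomputable def kalmanMatrix {n p : ℕ} (A : Matrix (Fin n) (Fin n) ℝ)
    (B : Matrix (Fin n) (Fin p) ℝ) : Matrix (Fin n) (Fin n × Fin p) ℝ :=
  Matrix.of fun i jk => (A ^ (jk.1 : ℕ) * B) i jk.2

/-- The controllability Gramian `𝔾 = ∫_{t0}^{t1} e^{(t1−s)A} B Bᵀ e^{(t1−s)Aᵀ} ds`. -/
noncomputable def gramian {n p : ℕ} (A : Matrix (Fin n) (Fin n) ℝ)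
    (B : Matrix (Fin n) (Fin p) ℝ) (t0 t1 : ℝ) : Matrix (Fin n) (Fin n) ℝ :=
  Matrix.of fun i j =>
    ∫ s in t0..t1, (exp ((t1 - s) • A) * B * Bᵀ * exp ((t1 - s) • Aᵀ)) i j


namespace Stmt4Aux

open Polynomial

section Norms
attribute [local instance] Matrix.linftyOpNormedRing Matrix.linftyOpNormedAlgebra

theorem contExpSmul {n : ℕ} (C : Matrix (Fin n) (Fin n) ℝ) :
    Continuous fun s : ℝ => exp (s • C) :=
  continuous_iff_continuousAt.2 fun s => (hasDerivAt_exp_smul_const C s).continuousAt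

/-- If `Bᵀ C^k x = 0` for all `k`, then `Bᵀ exp(t•C) x = 0`. -/
theorem exp_keeps_zero {n p : ℕ} (Bt : Matrix (Fin p) (Fin n) ℝ)
    (C : Matrix (Fin n) (Fin n) ℝ) (x : Fin n → ℝ)
    (h : ∀ k : ℕ, Bt *ᵥ (C ^ k *ᵥ x) = 0) (t : ℝ) :
    Bt *ᵥ (exp (t • C) *ᵥ x) = 0 := by
  classical
  let L : Matrix (Fin n) (Fin n) ℝ →ₗ[ℝ] (Fin p → ℝ) :=
    { toFun := fun M => Bt *ᵥ (M *ᵥ x)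
      map_add' := by intro M N; simp [Matrix.add_mulVec, Matrix.mulVec_add]
      map_smul' := by intro c M; simp [Matrix.smul_mulVec, Matrix.mulVec_smul] }
  let Lc : Matrix (Fin n) (Fin n) ℝ →L[ℝ] (Fin p → ℝ) :=
    { toLinearMap := L, cont := L.continuous_of_finiteDimensional }
  have hsum : Summable fun k : ℕ => ((k.factorial : ℝ)⁻¹) • (t • C) ^ k :=
    expSeries_summable' (𝕂 := ℝ) (t • C)
  have : Bt *ᵥ (exp (t • C) *ᵥ x) = Lc (exp (t • C)) := rfl
  rw [this, exp_eq_tsum (𝕂 := ℝ)]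
  rw [Lc.map_tsum hsum]
  have hterm : ∀ k : ℕ, Lc (((k.factorial : ℝ)⁻¹) • (t • C) ^ k) = 0 := by
    intro k
    have : ((k.factorial : ℝ)⁻¹) • (t • C) ^ k = ((k.factorial : ℝ)⁻¹ * t ^ k) • C ^ k := by
      rw [_root_.smul_pow, smul_smul]
    rw [this, Lc.map_smul]
    have : Lc (C ^ k) = 0 := h k
    rw [this, smul_zero]
  simp only [hterm, tsum_zero]

/-- If `Bᵀ exp(r•C) x = 0` on `Icc 0 δ`, `δ > 0`, then `Bᵀ C^k x = 0` for all `k`. -/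
theorem powers_vanish {n p : ℕ} (Bt : Matrix (Fin p) (Fin n) ℝ)
    (C : Matrix (Fin n) (Fin n) ℝ) (x : Fin n → ℝ) {δ : ℝ} (hδ : 0 < δ)
    (h : ∀ r ∈ Set.Icc (0:ℝ) δ, Bt *ᵥ (exp (r • C) *ᵥ x) = 0) (k : ℕ) :
    Bt *ᵥ (C ^ k *ᵥ x) = 0 := by
  classical
  let L : (Fin n → ℝ) → Matrix (Fin n) (Fin n) ℝ →L[ℝ] (Fin p → ℝ) := fun v =>
    { toLinearMap :=
        { toFun := fun M => Bt *ᵥ (M *ᵥ v)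
          map_add' := by intro M N; simp [Matrix.add_mulVec, Matrix.mulVec_add]
          map_smul' := by intro c M; simp [Matrix.smul_mulVec, Matrix.mulVec_smul] }
      cont := continuous_const.matrix_mulVec (continuous_id.matrix_mulVec continuous_const) }
  set hfun : ℕ → ℝ → (Fin p → ℝ) := fun k r => Bt *ᵥ (exp (r • C) *ᵥ (C ^ k *ᵥ x)) with hf_def
  have hcont : ∀ k, Continuous (hfun k) := fun k =>
    (L (C ^ k *ᵥ x)).continuous.comp (contExpSmul C)
  have hderiv : ∀ k r, HasDerivAt (hfun k) (hfun (k+1) r) r := by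
    intro k r
    have h1 : HasDerivAt (fun s : ℝ => exp (s • C)) (exp (r • C) * C) r :=
      hasDerivAt_exp_smul_const C r
    have h2 := ((L (C ^ k *ᵥ x)).hasFDerivAt).comp_hasDerivAt r h1
    refine h2.congr_deriv (Eq.symm ?_)
    show Bt *ᵥ (exp (r • C) *ᵥ (C ^ (k+1) *ᵥ x)) = Bt *ᵥ ((exp (r • C) * C) *ᵥ (C ^ k *ᵥ x))
    simp only [Matrix.mulVec_mulVec]
    rw [pow_succ' C k, ← mul_assoc (exp (r • C)) C (C ^ k)]
  have hzero : ∀ k, ∀ r ∈ Set.Ioo (0:ℝ) δ, hfun k r = 0 := by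
    intro k
    induction k with
    | zero =>
      intro r hr
      have := h r ⟨hr.1.le, hr.2.le⟩
      simpa [hfun, pow_zero, Matrix.one_mulVec] using this
    | succ k ih =>
      intro r hr
      have hev : hfun k =ᶠ[nhds r] (fun _ => (0 : Fin p → ℝ)) := by
        filter_upwards [isOpen_Ioo.mem_nhds hr] with s hs
        exact ih s hs
      have h0 : HasDerivAt (hfun k) 0 r :=
        (hasDerivAt_const r (0 : Fin p → ℝ)).congr_of_eventuallyEq hev
      exact ((hderiv k r).unique h0)
  have h0 : hfun k 0 = 0 := by
    have hcl : Set.EqOn (hfun k) (fun _ => (0 : Fin p → ℝ)) (closure (Set.Ioo (0:ℝ) δ)) :=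
      (Set.EqOn.closure (fun r hr => hzero k r hr) (hcont k) continuous_const)
    have : (0:ℝ) ∈ closure (Set.Ioo (0:ℝ) δ) := by
      rw [closure_Ioo hδ.ne]; exact ⟨le_refl _, hδ.le⟩
    exact hcl this
  simpa [hfun, zero_smul, exp_zero, Matrix.one_mulVec] using h0

end Norms

/-- Cayley–Hamilton bootstrap: low powers kill ⇒ all powers kill. -/
theorem all_powers_of_low {n p : ℕ} (Bt : Matrix (Fin p) (Fin n) ℝ)
    (C : Matrix (Fin n) (Fin n) ℝ) (x : Fin n → ℝ)
    (h : ∀ k < n, Bt *ᵥ (C ^ k *ᵥ x) = 0) (k : ℕ) :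
    Bt *ᵥ (C ^ k *ᵥ x) = 0 := by
  classical
  rcases Nat.eq_zero_or_pos n with hn | hn
  · subst hn
    funext j
    simp [Matrix.mulVec, dotProduct]
  rcases lt_or_ge k n with hk | hk
  · exact h k hk
  have hCH := Matrix.pow_eq_aeval_mod_charpoly C k
  set r := (X : ℝ[X]) ^ k %ₘ C.charpoly with hr
  have hdeg : r.natDegree < n := by
    have h1 : r.degree < C.charpoly.degree := degree_modByMonic_lt _ C.charpoly_monic
    have h2 : C.charpoly.degree = (n : ℕ) := by
      simpa [Fintype.card_fin] using C.charpoly_degree_eq_dim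
    rcases eq_or_ne r 0 with h0 | h0
    · simpa [h0] using hn
    · have := (Polynomial.degree_eq_natDegree h0) ▸ h1
      rw [h2] at this
      exact_mod_cast this
  have haev : aeval C r = ∑ i ∈ Finset.range (r.natDegree + 1), r.coeff i • C ^ i :=
    aeval_eq_sum_range (p := r) C
  let L0 : Matrix (Fin n) (Fin n) ℝ →ₗ[ℝ] (Fin p → ℝ) :=
    { toFun := fun M => Bt *ᵥ (M *ᵥ x)
      map_add' := by intro M N; simp [Matrix.add_mulVec, Matrix.mulVec_add]
      map_smul' := by intro c M; simp [Matrix.smul_mulVec, Matrix.mulVec_smul] }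
  show L0 (C ^ k) = 0
  rw [hCH, haev, map_sum]
  refine Finset.sum_eq_zero fun i hi => ?_
  have hi' : i < n := lt_of_lt_of_le (Finset.mem_range.mp hi) hdeg
  rw [LinearMap.map_smul]
  have : L0 (C ^ i) = 0 := h i hi'
  rw [this, smul_zero]

variable {n p : ℕ} (A : Matrix (Fin n) (Fin n) ℝ) (B : Matrix (Fin n) (Fin p) ℝ) (t0 t1 : ℝ)

theorem contE : Continuous fun s : ℝ => exp ((t1 - s) • A) :=
  (contExpSmul A).comp (continuous_const.sub continuous_id)

/-- the integrand of the Gramian -/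
noncomputable def W (s : ℝ) : Matrix (Fin n) (Fin n) ℝ :=
  exp ((t1 - s) • A) * B * Bᵀ * exp ((t1 - s) • Aᵀ)

theorem contW : Continuous fun s : ℝ => W A B t1 s :=
  (((contE A t1).matrix_mul continuous_const).matrix_mul continuous_const).matrix_mul
    (contE Aᵀ t1)

theorem contW_entry (i j : Fin n) : Continuous fun s : ℝ => W A B t1 s i j :=
  (continuous_apply j).comp ((continuous_apply i).comp (contW A B t1))

theorem gramian_entry (i j : Fin n) :
    gramian A B t0 t1 i j = ∫ s in t0..t1, W A B t1 s i j := rfl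

theorem gramian_mulVec (x : Fin n → ℝ) (i : Fin n) :
    (gramian A B t0 t1 *ᵥ x) i = ∫ s in t0..t1, (W A B t1 s *ᵥ x) i := by
  have : ∀ s, (W A B t1 s *ᵥ x) i = ∑ j, W A B t1 s i j * x j := fun s => rfl
  simp only [this]
  rw [intervalIntegral.integral_finset_sum]
  · simp only [Matrix.mulVec, dotProduct, gramian_entry]
    exact Finset.sum_congr rfl fun j _ =>
      (intervalIntegral.integral_mul_const (x j) _).symm
  · exact fun j _ => ((contW_entry A B t1 i j).mul continuous_const).intervalIntegrable _ _

theorem W_symm (s : ℝ) : (W A B t1 s)ᵀ = W A B t1 s := by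
  unfold W
  have hE : exp ((t1 - s) • Aᵀ) = (exp ((t1 - s) • A))ᵀ := by
    rw [← Matrix.transpose_smul, Matrix.exp_transpose]
  rw [hE]
  simp [Matrix.transpose_mul, Matrix.mul_assoc]

theorem gramian_symm : (gramian A B t0 t1)ᵀ = gramian A B t0 t1 := by
  ext i j
  show gramian A B t0 t1 j i = gramian A B t0 t1 i j
  rw [gramian_entry, gramian_entry]
  have : ∀ s, W A B t1 s j i = W A B t1 s i j := fun s => by
    conv_lhs => rw [← W_symm A B t1 s]
    exact Matrix.transpose_apply _ _ _
  simp only [this]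

/-- the adjoint control function -/
noncomputable def gv (x : Fin n → ℝ) (s : ℝ) : Fin p → ℝ :=
  Bᵀ *ᵥ (exp ((t1 - s) • Aᵀ) *ᵥ x)

theorem cont_gv (x : Fin n → ℝ) : Continuous fun s => gv A B t1 x s :=
  (continuous_const.matrix_mulVec ((contE Aᵀ t1).matrix_mulVec continuous_const))

theorem dot_W (x : Fin n → ℝ) (s : ℝ) :
    x ⬝ᵥ (W A B t1 s *ᵥ x) = gv A B t1 x s ⬝ᵥ gv A B t1 x s := by
  unfold W gv
  have hE : exp ((t1 - s) • Aᵀ) = (exp ((t1 - s) • A))ᵀ := by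
    rw [← Matrix.transpose_smul, Matrix.exp_transpose]
  set E := exp ((t1 - s) • A)
  rw [hE]
  have key : ∀ (P : Matrix (Fin n) (Fin p) ℝ) (v : Fin n → ℝ),
      v ⬝ᵥ ((P * Pᵀ) *ᵥ v) = (Pᵀ *ᵥ v) ⬝ᵥ (Pᵀ *ᵥ v) := by
    intro P v
    rw [← Matrix.mulVec_mulVec, dotProduct_mulVec, Matrix.mulVec_transpose]
  have h1 : E * B * Bᵀ * Eᵀ = (E * B) * ((E * B)ᵀ) := by
    rw [Matrix.transpose_mul, Matrix.mul_assoc]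
  rw [h1, key, Matrix.transpose_mul, ← Matrix.mulVec_mulVec]

theorem dot_gramian (x : Fin n → ℝ) :
    x ⬝ᵥ (gramian A B t0 t1 *ᵥ x) =
      ∫ s in t0..t1, gv A B t1 x s ⬝ᵥ gv A B t1 x s := by
  have h1 : x ⬝ᵥ (gramian A B t0 t1 *ᵥ x)
      = ∑ i, x i * ∫ s in t0..t1, (W A B t1 s *ᵥ x) i := by
    simp only [dotProduct]
    exact Finset.sum_congr rfl fun i _ => by rw [gramian_mulVec]
  rw [h1]
  have h2 : ∀ i : Fin n, x i * (∫ s in t0..t1, (W A B t1 s *ᵥ x) i)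
      = ∫ s in t0..t1, x i * (W A B t1 s *ᵥ x) i := fun i =>
    (intervalIntegral.integral_const_mul (x i) _).symm
  simp only [h2]
  rw [← intervalIntegral.integral_finset_sum]
  · exact intervalIntegral.integral_congr fun s _ => by
      rw [← dot_W]; rfl
  · intro i _
    refine (continuous_const.mul ?_).intervalIntegrable _ _
    exact (continuous_apply i).comp ((contW A B t1).matrix_mulVec continuous_const)

theorem ker_gramian_iff (ht : t0 < t1) (x : Fin n → ℝ) :
    gramian A B t0 t1 *ᵥ x = 0 ↔ ∀ s ∈ Set.Icc t0 t1, gv A B t1 x s = 0 := by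
  constructor
  · intro h0
    have hint : (∫ s in t0..t1, gv A B t1 x s ⬝ᵥ gv A B t1 x s) = 0 := by
      rw [← dot_gramian, h0, dotProduct_zero]
    have hnn : ∀ s, 0 ≤ gv A B t1 x s ⬝ᵥ gv A B t1 x s := fun s =>
      Finset.sum_nonneg fun j _ => mul_self_nonneg _
    have hcont : Continuous fun s => gv A B t1 x s ⬝ᵥ gv A B t1 x s :=
      (cont_gv A B t1 x).dotProduct (cont_gv A B t1 x)
    have hInt : IntervalIntegrable (fun s => gv A B t1 x s ⬝ᵥ gv A B t1 x s)
        volume t0 t1 := hcont.intervalIntegrable _ _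
    have hae := (intervalIntegral.integral_eq_zero_iff_of_le_of_nonneg_ae ht.le
      (Filter.Eventually.of_forall fun s => hnn s) hInt).mp hint
    have hIoc : ∀ s ∈ Set.Ioc t0 t1, gv A B t1 x s ⬝ᵥ gv A B t1 x s = 0 :=
      Measure.eqOn_Ioc_of_ae_eq volume hae hcont.continuousOn continuousOn_const
    have hIcc : ∀ s ∈ Set.Icc t0 t1, gv A B t1 x s ⬝ᵥ gv A B t1 x s = 0 := by
      have hcl : Set.EqOn (fun s => gv A B t1 x s ⬝ᵥ gv A B t1 x s) (fun _ => (0:ℝ))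
          (closure (Set.Ioc t0 t1)) :=
        Set.EqOn.closure hIoc hcont continuous_const
      intro s hs
      have : s ∈ closure (Set.Ioc t0 t1) := by
        rw [closure_Ioc ht.ne]; exact hs
      exact hcl this
    intro s hs
    exact (dotProduct_self_eq_zero).mp (hIcc s hs)
  · intro h
    funext i
    rw [gramian_mulVec]
    have : Set.EqOn (fun s => (W A B t1 s *ᵥ x) i) (fun _ => (0:ℝ)) (Set.uIcc t0 t1) := by
      intro s hs
      have hs' : s ∈ Set.Icc t0 t1 := by
        rwa [Set.uIcc_of_le ht.le] at hs
      have hWg : W A B t1 s *ᵥ x = (exp ((t1 - s) • A) * B) *ᵥ gv A B t1 x s := by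
        unfold W gv
        simp only [Matrix.mulVec_mulVec, Matrix.mul_assoc]
      show (W A B t1 s *ᵥ x) i = 0
      rw [hWg, h s hs', Matrix.mulVec_zero]
      rfl
    rw [intervalIntegral.integral_congr this]
    simp

/-- the Kalman kernel condition -/
theorem kalman_mulVec_eq_zero_iff (x : Fin n → ℝ) :
    (kalmanMatrix A B)ᵀ *ᵥ x = 0 ↔ ∀ k < n, Bᵀ *ᵥ ((Aᵀ) ^ k *ᵥ x) = 0 := by
  have key : ∀ (k : Fin n) (j : Fin p),
      ((kalmanMatrix A B)ᵀ *ᵥ x) (k, j) = (Bᵀ *ᵥ ((Aᵀ) ^ (k:ℕ) *ᵥ x)) j := by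
    intro k j
    show ∑ i, (kalmanMatrix A B) i (k, j) * x i = _
    rw [Matrix.mulVec_mulVec]
    have : Bᵀ * (Aᵀ) ^ (k:ℕ) = (A ^ (k:ℕ) * B)ᵀ := by
      rw [Matrix.transpose_mul, Matrix.transpose_pow]
    rw [this]
    show _ = ∑ i, ((A ^ (k:ℕ) * B)ᵀ) j i * x i
    exact Finset.sum_congr rfl fun i _ => rfl
  constructor
  · intro h k hk
    funext j
    have := congrFun h (⟨k, hk⟩, j)
    rw [key ⟨k, hk⟩ j] at this
    exact this
  · intro h
    funext kj
    obtain ⟨k, j⟩ := kj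
    rw [key k j, h k k.isLt]
    rfl

theorem ker_gramian_iff_kalman (ht : t0 < t1) (x : Fin n → ℝ) :
    gramian A B t0 t1 *ᵥ x = 0 ↔ (kalmanMatrix A B)ᵀ *ᵥ x = 0 := by
  rw [ker_gramian_iff A B t0 t1 ht, kalman_mulVec_eq_zero_iff]
  constructor
  · intro h k _
    refine powers_vanish Bᵀ Aᵀ x (sub_pos.mpr ht) ?_ k
    intro r hr
    have hs : t1 - r ∈ Set.Icc t0 t1 := by
      constructor <;> [linarith [hr.2]; linarith [hr.1]]
    have := h (t1 - r) hs
    unfold gv at this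
    rwa [show t1 - (t1 - r) = r by ring] at this
  · intro h s _
    have hall : ∀ k : ℕ, Bᵀ *ᵥ ((Aᵀ) ^ k *ᵥ x) = 0 :=
      all_powers_of_low Bᵀ Aᵀ x h
    unfold gv
    exact exp_keeps_zero Bᵀ Aᵀ x hall (t1 - s)

theorem inner_eq_dot (a b : EuclideanSpace ℝ (Fin n)) :
    (inner ℝ a b : ℝ) = (WithLp.equiv 2 (Fin n → ℝ) a) ⬝ᵥ (WithLp.equiv 2 (Fin n → ℝ) b) := by
  simp [PiLp.inner_apply, RCLike.inner_apply, dotProduct, mul_comm]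

theorem toEuc_apply {m' n' : Type*} [Fintype m'] [Fintype n'] [DecidableEq m'] [DecidableEq n']
    (M : Matrix m' n' ℝ) (v : EuclideanSpace ℝ n') :
    WithLp.equiv 2 (m' → ℝ) (Matrix.toEuclideanLin M v)
      = M *ᵥ (WithLp.equiv 2 (n' → ℝ) v) := rfl

theorem toEuc_eq_zero_iff {m' n' : Type*} [Fintype m'] [Fintype n'] [DecidableEq m']
    [DecidableEq n'] (M : Matrix m' n' ℝ) (v : EuclideanSpace ℝ n') :
    Matrix.toEuclideanLin M v = 0 ↔ M *ᵥ (WithLp.equiv 2 (n' → ℝ) v) = 0 := by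
  rw [← toEuc_apply]
  constructor
  · intro h; rw [h]; rfl
  · intro h
    exact (WithLp.equiv 2 (m' → ℝ)).injective h

/-- membership in the orthogonal complement of the range of the Gramian -/
theorem mem_orth_iff (x : EuclideanSpace ℝ (Fin n)) :
    x ∈ (LinearMap.range (Matrix.toEuclideanLin (gramian A B t0 t1)))ᗮ ↔
      gramian A B t0 t1 *ᵥ (WithLp.equiv 2 (Fin n → ℝ) x) = 0 := by
  set G := gramian A B t0 t1
  set x' := WithLp.equiv 2 (Fin n → ℝ) x with hx'
  have hdot : ∀ w : Fin n → ℝ, (G *ᵥ w) ⬝ᵥ x' = w ⬝ᵥ (G *ᵥ x') := by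
    intro w
    rw [dotProduct_comm, dotProduct_mulVec, ← Matrix.mulVec_transpose,
      gramian_symm, dotProduct_comm, dotProduct_mulVec,
      ← Matrix.mulVec_transpose, gramian_symm]
  rw [Submodule.mem_orthogonal]
  constructor
  · intro h
    have := h (Matrix.toEuclideanLin G ((WithLp.equiv 2 (Fin n → ℝ)).symm (G *ᵥ x')))
      ⟨_, rfl⟩
    rw [inner_eq_dot, toEuc_apply] at this
    simp only [Equiv.apply_symm_apply] at this
    rw [hdot] at this
    exact dotProduct_self_eq_zero.mp this
  · intro h y hy
    obtain ⟨w, rfl⟩ := hy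
    rw [inner_eq_dot, toEuc_apply, hdot, h, dotProduct_zero]

end Stmt4Aux

/-- With `𝒞 = range 𝔾` and `𝒰 = 𝒞^⊥` in `ℝ^n` (Euclidean):
(i) `ℝ^n = 𝒞 ⊕ 𝒰`; (ii) every element of `𝒞` is reachable from `0` at time `t0`
by an `L²` control; (iii) no element of `𝒰 \ {0}` is reachable from `0`;
(iv) `𝒰 = ker Mᵀ` where `M` is the Kalman matrix. -/
theorem statement_4 (n p : ℕ) (t0 t1 : ℝ) (ht : t0 < t1)
    (A : Matrix (Fin n) (Fin n) ℝ) (B : Matrix (Fin n) (Fin p) ℝ)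
    (𝒞 𝒰 : Submodule ℝ (EuclideanSpace ℝ (Fin n)))
    (h𝒞 : 𝒞 = LinearMap.range (Matrix.toEuclideanLin (gramian A B t0 t1)))
    (h𝒰 : 𝒰 = 𝒞ᗮ) :
    IsCompl 𝒞 𝒰 ∧
    (∀ ξ : EuclideanSpace ℝ (Fin n), ξ ∈ 𝒞 →
      ∃ u : ℝ → Fin p → ℝ,
        MemLp u 2 (volume.restrict (Set.Ioc t0 t1)) ∧
        (∫ s in t0..t1, (exp ((t1 - s) • A)).mulVec (B.mulVec (u s))) = ξ) ∧
    (∀ ξ : EuclideanSpace ℝ (Fin n), ξ ∈ 𝒰 → ξ ≠ 0 →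
      ¬ ∃ u : ℝ → Fin p → ℝ,
        MemLp u 2 (volume.restrict (Set.Ioc t0 t1)) ∧
        (∫ s in t0..t1, (exp ((t1 - s) • A)).mulVec (B.mulVec (u s))) = ξ) ∧
    𝒰 = LinearMap.ker (Matrix.toEuclideanLin (kalmanMatrix A B)ᵀ) := by
  subst h𝒰 h𝒞
  refine ⟨Submodule.isCompl_orthogonal_of_hasOrthogonalProjection, ?_, ?_, ?_⟩
  · -- (ii) reachability of range
    rintro ξ ⟨η, hη⟩
    set η' : Fin n → ℝ := WithLp.equiv 2 (Fin n → ℝ) η with hη'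
    refine ⟨Stmt4Aux.gv A B t1 η', ?_, ?_⟩
    · have hc := Stmt4Aux.cont_gv A B t1 η'
      obtain ⟨Cb, hCb⟩ := (isCompact_Icc (a := t0) (b := t1)).exists_bound_of_continuousOn
        hc.continuousOn
      have hb : ∀ᵐ s ∂(volume.restrict (Set.Ioc t0 t1)), ‖Stmt4Aux.gv A B t1 η' s‖ ≤ Cb := by
        filter_upwards [ae_restrict_mem measurableSet_Ioc] with s hs
        exact hCb s (Set.Ioc_subset_Icc_self hs)
      exact (memLp_top_of_bound hc.aestronglyMeasurable Cb hb).mono_exponent le_top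
    · have hint_eq : ∀ s : ℝ,
          (exp ((t1 - s) • A)).mulVec (B.mulVec (Stmt4Aux.gv A B t1 η' s))
            = Stmt4Aux.W A B t1 s *ᵥ η' := by
        intro s
        unfold Stmt4Aux.gv Stmt4Aux.W
        simp only [Matrix.mulVec_mulVec, Matrix.mul_assoc]
      set F : ℝ → (Fin n → ℝ) :=
        fun s => (exp ((t1 - s) • A)).mulVec (B.mulVec (Stmt4Aux.gv A B t1 η' s)) with hF
      have hFeq : F = fun s => Stmt4Aux.W A B t1 s *ᵥ η' := funext hint_eq
      have hFc : Continuous F := by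
        rw [hFeq]
        exact (Stmt4Aux.contW A B t1).matrix_mulVec continuous_const
      have hInt : IntervalIntegrable F volume t0 t1 := hFc.intervalIntegrable _ _
      have hξ' : gramian A B t0 t1 *ᵥ η' = WithLp.equiv 2 (Fin n → ℝ) ξ := by
        rw [← hη]
        rfl
      show (∫ s in t0..t1, F s) = ξ
      funext i
      have hcomp : (ContinuousLinearMap.proj (R := ℝ) (φ := fun _ : Fin n => ℝ) i)
            (∫ s in t0..t1, F s)
          = ∫ s in t0..t1,
              (ContinuousLinearMap.proj (R := ℝ) (φ := fun _ : Fin n => ℝ) i) (F s) :=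
        ((ContinuousLinearMap.proj (R := ℝ) (φ := fun _ : Fin n => ℝ) i).intervalIntegral_comp_comm hInt).symm
      have h1 : (∫ s in t0..t1, F s) i = ∫ s in t0..t1, (F s) i := hcomp
      rw [h1]
      have h2 : (∫ s in t0..t1, (F s) i) = ∫ s in t0..t1, (Stmt4Aux.W A B t1 s *ᵥ η') i := by
        refine intervalIntegral.integral_congr fun s _ => ?_
        exact congrFun (hint_eq s) i
      rw [h2, ← Stmt4Aux.gramian_mulVec A B t0 t1 η' i]
      exact congrFun hξ' i
  · -- (iii) unreachability of the orthogonal complement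
    rintro ξ hξU hξ0 ⟨u, -, hI⟩
    set ξ' : Fin n → ℝ := WithLp.equiv 2 (Fin n → ℝ) ξ with hξ'
    have hker : gramian A B t0 t1 *ᵥ ξ' = 0 :=
      (Stmt4Aux.mem_orth_iff A B t0 t1 ξ).mp hξU
    have hg : ∀ s ∈ Set.Icc t0 t1, Stmt4Aux.gv A B t1 ξ' s = 0 :=
      (Stmt4Aux.ker_gramian_iff A B t0 t1 ht ξ').mp hker
    set F : ℝ → (Fin n → ℝ) :=
      fun s => (exp ((t1 - s) • A)).mulVec (B.mulVec (u s)) with hF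
    by_cases hInt : IntervalIntegrable F volume t0 t1
    · let L : (Fin n → ℝ) →ₗ[ℝ] ℝ :=
        { toFun := fun v => ξ' ⬝ᵥ v
          map_add' := by intro a b; simp [dotProduct_add]
          map_smul' := by intro c a; simp [dotProduct_smul] }
      let Lc : (Fin n → ℝ) →L[ℝ] ℝ :=
        { toLinearMap := L, cont := L.continuous_of_finiteDimensional }
      have h1 : Lc (∫ s in t0..t1, F s) = ∫ s in t0..t1, Lc (F s) :=
        (Lc.intervalIntegral_comp_comm hInt).symm
      rw [hI] at h1
      have h2 : ∀ s ∈ Set.uIcc t0 t1, Lc (F s) = 0 := by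
        intro s hs
        have hs' : s ∈ Set.Icc t0 t1 := by rwa [Set.uIcc_of_le ht.le] at hs
        have hE : exp ((t1 - s) • Aᵀ) = (exp ((t1 - s) • A))ᵀ := by
          rw [← Matrix.transpose_smul, Matrix.exp_transpose]
        have key : Lc (F s) = Stmt4Aux.gv A B t1 ξ' s ⬝ᵥ u s := by
          show ξ' ⬝ᵥ ((exp ((t1 - s) • A)) *ᵥ (B *ᵥ u s)) = _
          rw [dotProduct_mulVec, ← Matrix.mulVec_transpose,
            dotProduct_mulVec, ← Matrix.mulVec_transpose]
          unfold Stmt4Aux.gv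
          rw [hE]
        rw [key, hg s hs', zero_dotProduct]
      have h3 : (∫ s in t0..t1, Lc (F s)) = 0 := by
        rw [intervalIntegral.integral_congr h2, intervalIntegral.integral_zero]
      rw [h3] at h1
      have hdot : ξ' ⬝ᵥ ξ' = 0 := h1
      have hz : ξ' = 0 := dotProduct_self_eq_zero.mp hdot
      refine hξ0 ?_
      exact (WithLp.equiv 2 (Fin n → ℝ)).injective hz
    · rw [intervalIntegral.integral_undef hInt] at hI
      exact hξ0 ((WithLp.equiv 2 (Fin n → ℝ)).injective hI.symm)
  · -- (iv) the Kalman characterization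
    ext x
    rw [LinearMap.mem_ker]
    have h1 : x ∈ (LinearMap.range (Matrix.toEuclideanLin (gramian A B t0 t1)))ᗮ ↔
        gramian A B t0 t1 *ᵥ (WithLp.equiv 2 (Fin n → ℝ) x) = 0 :=
      Stmt4Aux.mem_orth_iff A B t0 t1 x
    rw [show (x ∈ (LinearMap.range (Matrix.toEuclideanLin (gramian A B t0 t1)))ᗮ) ↔ _ from h1,
      Stmt4Aux.toEuc_eq_zero_iff]
    exact Stmt4Aux.ker_gramian_iff_kalman A B t0 t1 ht _
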